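/- Let E(c, Q) ⊂ ℝⁿ be a rational ellipsoid and let δ ∈ ℚ be positive. Then there exists an invertible matrix B ∈ ℚ^{n×n} such that, with τ(x) := B(x − c), one has B(0,1) ⊆ τ(E(c, Q)) ⊆ B(0, 1 + δ). -/

import Mathlib

open Matrix


lemma quad_basis {n : ℕ} (M : Matrix (Fin n) (Fin n) ℚ) (i j : Fin n) :
    (Pi.single i 1 : Fin n → ℚ) ⬝ᵥ M *ᵥ (Pi.single j 1) = M i j := by
  rw [single_dotProduct, mulVec_single]
  simp

lemma sym_matrix_ext {n : ℕ} {A B : Matrix (Fin n) (Fin n) ℚ} (hA : Aᵀ = A) (hB : Bᵀ = B)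
    (h : ∀ x : Fin n → ℚ, x ⬝ᵥ A *ᵥ x = x ⬝ᵥ B *ᵥ x) : A = B := by
  ext i j
  have h1 := h ((Pi.single i 1 : Fin n → ℚ) + Pi.single j 1)
  have h2 := h (Pi.single i 1)
  have h3 := h (Pi.single j 1)
  simp only [mulVec_add, dotProduct_add, add_dotProduct, quad_basis] at h1 h2 h3
  have hAij : A j i = A i j := by
    have := congrFun (congrFun hA i) j; simpa [transpose_apply] using this
  have hBij : B j i = B i j := by
    have := congrFun (congrFun hB i) j; simpa [transpose_apply] using this
  linarith

lemma rat_decomp {n : ℕ} (Q : Matrix (Fin n) (Fin n) ℚ) (hsym : Qᵀ = Q)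
    (hpos : ∀ x : Fin n → ℚ, x ≠ 0 → 0 < x ⬝ᵥ Q *ᵥ x) :
    ∃ (L : Matrix (Fin n) (Fin n) ℚ) (w : Fin n → ℚ), IsUnit L ∧ (∀ i, 0 < w i) ∧
      Q = Lᵀ * diagonal w * L := by
  haveI : Invertible (2 : ℚ) := invertibleOfNonzero two_ne_zero
  set Qf := Matrix.toQuadraticMap' Q with hQf
  have hQf_apply : ∀ x : Fin n → ℚ, Qf x = x ⬝ᵥ Q *ᵥ x := by
    intro x
    simp [hQf, Matrix.toQuadraticMap', Matrix.toQuadraticForm', LinearMap.BilinMap.toQuadraticMap_apply,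
      Matrix.toLinearMap₂'_apply']
  obtain ⟨w₀, ⟨φ⟩⟩ := QuadraticForm.equivalent_weightedSumSquares Qf
  have hm : Module.finrank ℚ (Fin n → ℚ) = n := Module.finrank_fin_fun ℚ
  set e : Fin (Module.finrank ℚ (Fin n → ℚ)) ≃ Fin n := finCongr hm with he
  set M₀ : Matrix (Fin (Module.finrank ℚ (Fin n → ℚ))) (Fin n) ℚ :=
    LinearMap.toMatrix' φ.toLinearEquiv.toLinearMap with hM₀
  have hM₀_apply : ∀ x : Fin n → ℚ, M₀ *ᵥ x = φ x := by
    intro x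
    rw [hM₀, ← Matrix.toLin'_apply, Matrix.toLin'_toMatrix']
    rfl
  set L : Matrix (Fin n) (Fin n) ℚ := M₀.submatrix e.symm (Equiv.refl _) with hL
  have hL_apply : ∀ x : Fin n → ℚ, ∀ i : Fin n, (L *ᵥ x) i = φ x (e.symm i) := by
    intro x i
    rw [hL, submatrix_mulVec_equiv]
    simp [hM₀_apply]
  refine ⟨L, fun i => w₀ (e.symm i), ?_, ?_, ?_⟩
  · rw [← mulVec_injective_iff_isUnit]
    intro x y hxy
    have : ∀ i, φ x (e.symm i) = φ y (e.symm i) := fun i => by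
      rw [← hL_apply, ← hL_apply, hxy]
    have hxy' : φ x = φ y := by
      funext k
      have := this (e k); simpa using this
    exact φ.toLinearEquiv.injective hxy'
  · intro i
    set x := φ.toLinearEquiv.symm (Pi.single (e.symm i) 1) with hx
    have hxne : x ≠ 0 := by
      simp only [hx, ne_eq, LinearEquiv.map_eq_zero_iff]
      intro h
      have := congrFun h (e.symm i)
      simp at this
    have h1 : Qf x = w₀ (e.symm i) := by
      have : QuadraticMap.weightedSumSquares ℚ w₀ (φ x) = Qf x := φ.map_app x
      rw [← this]
      have : φ x = Pi.single (e.symm i) 1 := φ.toLinearEquiv.apply_symm_apply _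
      rw [this, QuadraticMap.weightedSumSquares_apply]
      rw [Finset.sum_eq_single (e.symm i)] <;> simp +contextual [Pi.single_apply]
    have := hpos x hxne
    rw [← hQf_apply, h1] at this
    exact this
  · apply sym_matrix_ext hsym
    · rw [transpose_mul, transpose_mul, transpose_transpose, diagonal_transpose, mul_assoc]
    · intro x
      have lhs : x ⬝ᵥ Q *ᵥ x = ∑ i : Fin n, w₀ (e.symm i) * ((L *ᵥ x) i * (L *ᵥ x) i) := by
        rw [← hQf_apply, ← φ.map_app x, QuadraticMap.weightedSumSquares_apply]
        rw [← Equiv.sum_comp e.symm]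
        congr 1
        funext i
        rw [hL_apply]
        simp [smul_eq_mul]
      rw [lhs]
      rw [← mulVec_mulVec, ← mulVec_mulVec, dotProduct_mulVec x Lᵀ, vecMul_transpose]
      rw [dotProduct]
      congr 1
      funext i
      rw [mulVec_diagonal]
      ring

lemma quad_decomp_apply {n : ℕ} (L : Matrix (Fin n) (Fin n) ℝ) (w : Fin n → ℝ)
    (v : Fin n → ℝ) :
    v ⬝ᵥ (Lᵀ * diagonal w * L) *ᵥ v = ∑ i, w i * ((L *ᵥ v) i) ^ 2 := by
  rw [← mulVec_mulVec, ← mulVec_mulVec, dotProduct_mulVec v Lᵀ, vecMul_transpose, dotProduct]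
  congr 1
  funext i
  rw [mulVec_diagonal]
  ring


/-- The Euclidean norm of a vector in `ℝⁿ`. -/
noncomputable def enorm {n : ℕ} (x : Fin n → ℝ) : ℝ := Real.sqrt (∑ i, x i ^ 2)

/-- The Euclidean ball `B(c, r) = {x : ‖x − c‖ ≤ r}`. -/
noncomputable def eball {n : ℕ} (c : Fin n → ℝ) (r : ℝ) : Set (Fin n → ℝ) :=
  {x | _root_.enorm (x - c) ≤ r}

/-- For every rational ellipsoid `E(c,Q)` and positive rational `δ`,
there is an invertible `B ∈ ℚ^{n×n}` such that, with `τ(x) = B(x − c)`, one has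
`B(0,1) ⊆ τ(E(c,Q)) ⊆ B(0, 1+δ)`. -/
theorem stmt_9 (n : ℕ) (c : Fin n → ℚ) (Q : Matrix (Fin n) (Fin n) ℚ)
    (hQ : (Q.map ((↑) : ℚ → ℝ)).PosDef) (δ : ℚ) (hδ : 0 < δ) :
    ∃ B : Matrix (Fin n) (Fin n) ℚ, IsUnit B ∧
      eball 0 1 ⊆
        (fun x : Fin n → ℝ =>
            (B.map ((↑) : ℚ → ℝ)).mulVec (x - fun i => (c i : ℝ))) ''
          {x : Fin n → ℝ |
            (x - fun i => (c i : ℝ)) ⬝ᵥ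
              (Q.map ((↑) : ℚ → ℝ)).mulVec (x - fun i => (c i : ℝ)) ≤ 1} ∧
      (fun x : Fin n → ℝ =>
            (B.map ((↑) : ℚ → ℝ)).mulVec (x - fun i => (c i : ℝ))) ''
          {x : Fin n → ℝ |
            (x - fun i => (c i : ℝ)) ⬝ᵥ
              (Q.map ((↑) : ℚ → ℝ)).mulVec (x - fun i => (c i : ℝ)) ≤ 1}
        ⊆ eball 0 (1 + (δ : ℝ)) := by
  set ρ : ℚ →+* ℝ := Rat.castHom ℝ with hρ
  set Qr := Q.map ((↑) : ℚ → ℝ) with hQr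
  -- cast lemma for quadratic forms
  have hcast : ∀ (M : Matrix (Fin n) (Fin n) ℚ) (x : Fin n → ℚ),
      ((x ⬝ᵥ M *ᵥ x : ℚ) : ℝ) = (fun i => (x i : ℝ)) ⬝ᵥ (M.map ((↑) : ℚ → ℝ)) *ᵥ
        (fun i => (x i : ℝ)) := by
    intro M x
    have h1 : ((x ⬝ᵥ M *ᵥ x : ℚ) : ℝ) = (ρ ∘ x) ⬝ᵥ (ρ ∘ (M *ᵥ x)) :=
      RingHom.map_dotProduct ρ x (M *ᵥ x)
    rw [h1]
    congr 1
    funext i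
    exact RingHom.map_mulVec ρ M x i
  -- symmetry of Q over ℚ
  have hsym : Qᵀ = Q := by
    ext i j
    have := hQ.1.apply i j
    simp only [hQr, map_apply, star_trivial] at this
    exact_mod_cast this
  -- positivity over ℚ
  have hpos : ∀ x : Fin n → ℚ, x ≠ 0 → 0 < x ⬝ᵥ Q *ᵥ x := by
    intro x hx
    have hxr : (fun i => (x i : ℝ)) ≠ 0 := by
      intro h
      apply hx
      funext i
      have : ((x i : ℝ)) = 0 := by simpa using congrFun h i
      exact_mod_cast this
    have := hQ.dotProduct_mulVec_pos hxr
    rw [star_trivial] at this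
    rw [← hcast] at this
    exact_mod_cast this
  obtain ⟨L, w, hL, hw, hdec⟩ := rat_decomp Q hsym hpos
  -- choose rational approximations of sqrt of weights
  have hr : ∀ i : Fin n, ∃ q : ℚ, ((w i : ℝ) ≤ (q : ℝ) ^ 2 ∧
      (q : ℝ) ^ 2 ≤ (1 + (δ : ℝ)) ^ 2 * (w i : ℝ)) ∧ q ≠ 0 := by
    intro i
    have hwi : (0 : ℝ) < (w i : ℝ) := by exact_mod_cast hw i
    have hs : Real.sqrt (w i : ℝ) < (1 + (δ : ℝ)) * Real.sqrt (w i : ℝ) := by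
      have h1 : (0 : ℝ) < Real.sqrt (w i : ℝ) := Real.sqrt_pos.mpr hwi
      have h2 : (1 : ℝ) < 1 + (δ : ℝ) := by
        have : (0 : ℝ) < (δ : ℝ) := by exact_mod_cast hδ
        linarith
      nlinarith
    obtain ⟨q, hq1, hq2⟩ := exists_rat_btwn hs
    have hsq : Real.sqrt (w i : ℝ) ^ 2 = (w i : ℝ) := Real.sq_sqrt hwi.le
    have hsnn : (0 : ℝ) ≤ Real.sqrt (w i : ℝ) := Real.sqrt_nonneg _
    refine ⟨q, ⟨by nlinarith, by nlinarith⟩, ?_⟩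
    intro h
    rw [h] at hq1
    simp only [Rat.cast_zero] at hq1
    nlinarith
  choose r hrw hrne using hr
  have hBu : IsUnit (diagonal r * L) :=
    ((isUnit_iff_isUnit_det _).mpr (by
      rw [det_diagonal]
      exact isUnit_iff_ne_zero.mpr (Finset.prod_ne_zero_iff.mpr fun i _ => hrne i))).mul hL
  set Lr := L.map ((↑) : ℚ → ℝ) with hLr
  set Br := (diagonal r * L).map ((↑) : ℚ → ℝ) with hBr
  have hmapρ : ∀ (M : Matrix (Fin n) (Fin n) ℚ), M.map ((↑) : ℚ → ℝ) = M.map ρ := fun _ => rfl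
  have hBrdec : Br = diagonal (fun i => (r i : ℝ)) * Lr := by
    rw [hBr, hLr, hmapρ, hmapρ, Matrix.map_mul, diagonal_map (by simp [hρ] : ρ 0 = 0)]
    rfl
  have hQrdec : Qr = Lrᵀ * diagonal (fun i => (w i : ℝ)) * Lr := by
    rw [hQr, hLr, hmapρ, hmapρ, hdec, Matrix.map_mul, Matrix.map_mul,
      diagonal_map (by simp [hρ] : ρ 0 = 0), Matrix.transpose_map]
    rfl
  have qid : ∀ v : Fin n → ℝ, v ⬝ᵥ Qr *ᵥ v = ∑ i, (w i : ℝ) * ((Lr *ᵥ v) i) ^ 2 := by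
    intro v
    rw [hQrdec]
    exact quad_decomp_apply _ _ _
  have hB_apply : ∀ (v : Fin n → ℝ) (i : Fin n),
      (Br *ᵥ v) i = (r i : ℝ) * ((Lr *ᵥ v) i) := by
    intro v i
    rw [hBrdec, ← mulVec_mulVec, mulVec_diagonal]
  have hBsq : ∀ v : Fin n → ℝ, ∑ i, ((Br *ᵥ v) i) ^ 2
      = ∑ i, (r i : ℝ) ^ 2 * ((Lr *ᵥ v) i) ^ 2 := by
    intro v
    congr 1
    funext i
    rw [hB_apply]
    ring
  have hdetR : IsUnit Br.det := by
    have hdetB : (diagonal r * L).det ≠ 0 :=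
      isUnit_iff_ne_zero.mp ((isUnit_iff_isUnit_det _).mp hBu)
    have h2 : (ρ (diagonal r * L).det : ℝ) = Br.det := by
      rw [hBr, hmapρ]
      exact RingHom.map_det ρ _
    rw [← h2]
    refine isUnit_iff_ne_zero.mpr ?_
    simp only [hρ, Rat.coe_castHom, ne_eq, Rat.cast_eq_zero]
    exact hdetB
  refine ⟨diagonal r * L, hBu, ?_, ?_⟩
  · intro z hz
    have hz0 : (0 : ℝ) ≤ ∑ i, z i ^ 2 := by positivity
    have hz1 : ∑ i, z i ^ 2 ≤ 1 := by
      have h1 : _root_.enorm z ≤ 1 := by simpa [eball] using hz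
      rw [_root_.enorm] at h1
      nlinarith [Real.sq_sqrt hz0, Real.sqrt_nonneg (∑ i, z i ^ 2)]
    set v := Br⁻¹ *ᵥ z with hv
    have hBv : Br *ᵥ v = z := by
      rw [hv, mulVec_mulVec, mul_nonsing_inv _ hdetR, one_mulVec]
    have hvc : (v + (fun i => (c i : ℝ))) - (fun i => (c i : ℝ)) = v :=
      add_sub_cancel_right _ _
    refine ⟨v + (fun i => (c i : ℝ)), ?_, ?_⟩
    · simp only [Set.mem_setOf_eq, hvc]
      rw [qid]
      calc ∑ i, (w i : ℝ) * ((Lr *ᵥ v) i) ^ 2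
          ≤ ∑ i, (r i : ℝ) ^ 2 * ((Lr *ᵥ v) i) ^ 2 :=
            Finset.sum_le_sum fun i _ =>
              mul_le_mul_of_nonneg_right (hrw i).1 (sq_nonneg _)
        _ = ∑ i, ((Br *ᵥ v) i) ^ 2 := (hBsq v).symm
        _ = ∑ i, z i ^ 2 := by rw [hBv]
        _ ≤ 1 := hz1
    · show Br *ᵥ _ = z
      rw [hvc, hBv]
  · rintro z ⟨x, hx, rfl⟩
    simp only [Set.mem_setOf_eq] at hx
    set v := x - (fun i => (c i : ℝ)) with hv
    have hδR : (0 : ℝ) ≤ 1 + (δ : ℝ) := by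
      have : (0 : ℝ) < (δ : ℝ) := by exact_mod_cast hδ
      linarith
    have key : ∑ i, ((Br *ᵥ v) i) ^ 2 ≤ (1 + (δ : ℝ)) ^ 2 := by
      calc ∑ i, ((Br *ᵥ v) i) ^ 2
          = ∑ i, (r i : ℝ) ^ 2 * ((Lr *ᵥ v) i) ^ 2 := hBsq v
        _ ≤ ∑ i, (1 + (δ : ℝ)) ^ 2 * ((w i : ℝ) * ((Lr *ᵥ v) i) ^ 2) := by
            refine Finset.sum_le_sum fun i _ => ?_
            rw [← mul_assoc]
            exact mul_le_mul_of_nonneg_right (hrw i).2 (sq_nonneg _)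
        _ = (1 + (δ : ℝ)) ^ 2 * ∑ i, (w i : ℝ) * ((Lr *ᵥ v) i) ^ 2 := by
            rw [Finset.mul_sum]
        _ ≤ (1 + (δ : ℝ)) ^ 2 * 1 := by
            refine mul_le_mul_of_nonneg_left ?_ (by positivity)
            rw [← qid]
            exact hx
        _ = (1 + (δ : ℝ)) ^ 2 := mul_one _
    show _root_.enorm _ ≤ _
    rw [sub_zero, _root_.enorm]
    calc Real.sqrt (∑ i, ((Br *ᵥ v) i) ^ 2) ≤ Real.sqrt ((1 + (δ : ℝ)) ^ 2) :=
          Real.sqrt_le_sqrt key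
      _ = 1 + (δ : ℝ) := Real.sqrt_sq hδR
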